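/- arXiv:2310.16687 — 3 statements merged into one kernel-verified Lean document; each statement's English description precedes it below -/
import Mathlib

section
/- For every natural number n, lim_{ε→0, ε≠0} ( Γ(-n + ε) - (-1)^n/(n! · ε) ) = (-1)^n ψ(n+1) / n!, where ψ = Γ'/Γ is the digamma function. -/
/-!
Write `Γ(-n + ε) = h(ε)/ε` with `h(ε) = (-1)ⁿ Γ(1 + ε) Γ(1 - ε) / Γ(n + 1 - ε)`, which follows from
the reflection formula `Γ(z) Γ(1 - z) = π / sin (π z)` applied at `z = ε - n` and at `z = ε`.
Then `h` is holomorphic at `0`, `h(0) = (-1)ⁿ/n!`, and the expression in the limit is the difference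
quotient `(h(ε) - h(0))/ε`, so the limit is `h'(0)`. Since `ε ↦ Γ(1 + ε) Γ(1 - ε)` is even, only the
denominator contributes to `h'(0)`, giving `(-1)ⁿ Γ'(n + 1) / n!² = (-1)ⁿ ψ(n + 1) / n!`.
-/

/-- The digamma function `ψ = Γ'/Γ`. -/
noncomputable def digamma (z : ℂ) : ℂ := deriv Complex.Gamma z / Complex.Gamma z

open Filter Topology
open scoped Nat Real

theorem tendsto_div_sub_div_of_hasDerivAt {𝕜 : Type*} [NontriviallyNormedField 𝕜] {h : 𝕜 → 𝕜}
    {h' : 𝕜} (hh : HasDerivAt h h' 0) :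
    Tendsto (fun ε => h ε / ε - h 0 / ε) (𝓝[≠] 0) (𝓝 h') := by
  refine (hasDerivAt_iff_tendsto_slope.mp hh).congr fun ε => ?_
  rw [slope_def_field, sub_zero, sub_div]

theorem HasDerivAt.mul_comp_add_sub {𝕜 : Type*} [NontriviallyNormedField 𝕜] {f : 𝕜 → 𝕜}
    {f' a : 𝕜} (hf : HasDerivAt f f' a) :
    HasDerivAt (fun ε => f (a + ε) * f (a - ε)) 0 0 := by
  have hplus : HasDerivAt (fun ε => f (a + ε)) f' 0 :=
    HasDerivAt.comp_const_add a 0 (by rwa [add_zero])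
  have hminus : HasDerivAt (fun ε => f (a - ε)) (-f') 0 :=
    HasDerivAt.comp_const_sub a 0 (by rwa [sub_zero])
  exact (hplus.fun_mul hminus).congr_deriv (by simp only [add_zero, sub_zero]; ring)

namespace Complex

theorem Gamma_sub_nat_mul_Gamma_one_sub (z : ℂ) (n : ℕ) :
    Gamma (z - n) * Gamma (1 - (z - n)) = (-1) ^ n * (Gamma z * Gamma (1 - z)) := by
  rw [Gamma_mul_Gamma_one_sub, Gamma_mul_Gamma_one_sub, mul_sub, mul_comm (π : ℂ) n,
    sin_antiperiodic.sub_nat_mul_eq, div_eq_mul_inv, div_eq_mul_inv, mul_inv, ← inv_pow,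
    inv_neg_one]
  ring

noncomputable def GammaPoleNumerator (n : ℕ) (ε : ℂ) : ℂ :=
  (-1) ^ n * (Gamma (1 + ε) * Gamma (1 - ε)) / Gamma (n + 1 - ε)

theorem Gamma_neg_nat_add_eq_div (n : ℕ) {ε : ℂ} (hε₀ : ε ≠ 0) (hε : ε.re < 1) :
    Gamma (-n + ε) = GammaPoleNumerator n ε / ε := by
  have hΓ : Gamma (n + 1 - ε) ≠ 0 :=
    Gamma_ne_zero_of_re_pos <| by
      simp only [sub_re, add_re, natCast_re, one_re]
      linarith [(n.cast_nonneg : (0 : ℝ) ≤ n)]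
  have hrefl := Gamma_sub_nat_mul_Gamma_one_sub ε n
  rw [show 1 - (ε - n) = n + 1 - ε by ring] at hrefl
  rw [neg_add_eq_sub, GammaPoleNumerator, add_comm 1 ε, Gamma_add_one ε hε₀, eq_div_iff hε₀,
    eq_div_iff hΓ]
  linear_combination ε * hrefl

theorem GammaPoleNumerator_zero (n : ℕ) : GammaPoleNumerator n 0 = (-1) ^ n / n ! := by
  simp [GammaPoleNumerator, Gamma_nat_eq_factorial]

theorem hasDerivAt_GammaPoleNumerator (n : ℕ) :
    HasDerivAt (GammaPoleNumerator n) ((-1) ^ n * _root_.digamma (n + 1) / n !) 0 := by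
  have hΓn : HasDerivAt Gamma (deriv Gamma (n + 1)) (n + 1 - 0) := by
    rw [sub_zero]
    refine (differentiableAt_Gamma _ fun m h => ?_).hasDerivAt
    have hre := congrArg re h
    simp only [add_re, natCast_re, one_re, neg_re] at hre
    linarith [(m.cast_nonneg : (0 : ℝ) ≤ m), (n.cast_nonneg : (0 : ℝ) ≤ n)]
  have hden := HasDerivAt.comp_const_sub ((n : ℂ) + 1) 0 hΓn
  have hnum := differentiableAt_Gamma_one.hasDerivAt.mul_comp_add_sub.const_mul ((-1 : ℂ) ^ n)
  have hfac : (n ! : ℂ) ≠ 0 := by exact_mod_cast n.factorial_ne_zero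
  refine (hnum.div hden ?_).congr_deriv ?_
  · simpa [Gamma_nat_eq_factorial] using hfac
  · simp only [_root_.digamma, add_zero, sub_zero, Gamma_one, Gamma_nat_eq_factorial]
    field_simp
    ring

end Complex

/-- The constant term in the Laurent expansion of `Γ` at `-n`:
`lim_{ε→0, ε≠0} (Γ(-n+ε) - (-1)^n/(n!·ε)) = (-1)^n ψ(n+1)/n!`. -/
theorem stmt2 (n : ℕ) :
    Filter.Tendsto
      (fun ε : ℂ => Complex.Gamma (-(n : ℂ) + ε) - (-1) ^ n / ((Nat.factorial n : ℂ) * ε))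
      (nhdsWithin 0 {0}ᶜ)
      (nhds ((-1) ^ n * digamma ((n : ℂ) + 1) / (Nat.factorial n : ℂ))) := by
  have hlim := tendsto_div_sub_div_of_hasDerivAt (Complex.hasDerivAt_GammaPoleNumerator n)
  rw [Complex.GammaPoleNumerator_zero] at hlim
  refine hlim.congr' ?_
  have hre : ∀ᶠ ε : ℂ in 𝓝[≠] 0, ε.re < 1 :=
    eventually_nhdsWithin_of_eventually_nhds <|
      (Complex.continuous_re.isOpen_preimage _ isOpen_Iio).mem_nhds (by simp)
  filter_upwards [hre, self_mem_nhdsWithin] with ε hε hε₀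
  rw [Complex.Gamma_neg_nat_add_eq_div n hε₀ hε, div_div]
end

section
/- Let k, l be integers with k, l ≤ 1 and let m, n satisfy (k-2)/2 ≤ m ≤ (2-k)/2 and (l-2)/2 ≤ n ≤ (2-l)/2 (all shifted quantities integers). Suppose abstract elements H^k_m satisfy [H^k_m, H^l_n] = -(κ/2) · (n(2-k) - m(2-l)) · ( ((2-k)/2 - m + (2-l)/2 - n - 1)! / ( ((2-k)/2 - m)! ((2-l)/2 - n)! ) ) · ( ((2-k)/2 + m + (2-l)/2 + n - 1)! / ( ((2-k)/2 + m)! ((2-l)/2 + n)! ) ) · H^{k+l}_{m+n}. Define w^p_m := (1/κ) (p - m - 1)! (p + m - 1)! H^{4-2p}_m for p = (4-k)/2. Then [w^p_m, w^q_n] = (m(q-1) - n(p-1)) · w^{p+q-2}_{m+n}. -/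
/-- The scalar identity converting the conformally soft graviton mode algebra
`[H^k_m, H^l_n] = -(κ/2)(n(2-k)-m(2-l)) · (((2-k)/2-m+(2-l)/2-n-1)!/(((2-k)/2-m)!((2-l)/2-n)!))
· (((2-k)/2+m+(2-l)/2+n-1)!/(((2-k)/2+m)!((2-l)/2+n)!)) H^{k+l}_{m+n}`
into the `w_{1+∞}` wedge structure constants under
`w^p_m = (1/κ)(p-m-1)!(p+m-1)! H^{4-2p}_m`: by bilinearity it suffices that the
renormalized structure constant equals `(m(q-1)-n(p-1))` times the renormalization
factor of `w^{p+q-2}_{m+n}`. The wedge conditions are encoded by the natural numbers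
`A = p-m-1`, `B = p+m-1`, `C = q-n-1`, `D = q+n-1` (all factorial arguments ≥ 0). -/
theorem stmt18 (κ : ℂ) (hκ : κ ≠ 0) (k l : ℤ) (hk1 : k ≤ 1) (hl1 : l ≤ 1)
    (p q m n : ℂ) (A B C D : ℕ)
    (hA : p - m - 1 = (A : ℂ)) (hB : p + m - 1 = (B : ℂ))
    (hC : q - n - 1 = (C : ℂ)) (hD : q + n - 1 = (D : ℂ))
    (hk : (k : ℂ) = 4 - 2 * p) (hl : (l : ℂ) = 4 - 2 * q)
    (hAC : 1 ≤ A + C) (hBD : 1 ≤ B + D) :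
    ((1 / κ) * (Nat.factorial A : ℂ) * (Nat.factorial B : ℂ)) *
        ((1 / κ) * (Nat.factorial C : ℂ) * (Nat.factorial D : ℂ)) *
        (-(κ / 2) * (n * (2 - (k : ℂ)) - m * (2 - (l : ℂ))) *
          ((Nat.factorial (A + C - 1) : ℂ) /
            ((Nat.factorial A : ℂ) * (Nat.factorial C : ℂ))) *
          ((Nat.factorial (B + D - 1) : ℂ) /
            ((Nat.factorial B : ℂ) * (Nat.factorial D : ℂ)))) =
      (m * (q - 1) - n * (p - 1)) *
        ((1 / κ) * (Nat.factorial (A + C - 1) : ℂ) * (Nat.factorial (B + D - 1) : ℂ)) := by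
  have hA' : (Nat.factorial A : ℂ) ≠ 0 := Nat.cast_ne_zero.2 (Nat.factorial_ne_zero A)
  have hB' : (Nat.factorial B : ℂ) ≠ 0 := Nat.cast_ne_zero.2 (Nat.factorial_ne_zero B)
  have hC' : (Nat.factorial C : ℂ) ≠ 0 := Nat.cast_ne_zero.2 (Nat.factorial_ne_zero C)
  have hD' : (Nat.factorial D : ℂ) ≠ 0 := Nat.cast_ne_zero.2 (Nat.factorial_ne_zero D)
  rw [hk, hl]
  have h1 := mul_inv_cancel₀ hA'
  have h2 := mul_inv_cancel₀ hB'
  have h3 := mul_inv_cancel₀ hC'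
  have h4 := mul_inv_cancel₀ hD'
  have h5 := mul_inv_cancel₀ hκ
  calc ((1 / κ) * (Nat.factorial A : ℂ) * (Nat.factorial B : ℂ)) *
        ((1 / κ) * (Nat.factorial C : ℂ) * (Nat.factorial D : ℂ)) *
        (-(κ / 2) * (n * (2 - (4 - 2 * p)) - m * (2 - (4 - 2 * q))) *
          ((Nat.factorial (A + C - 1) : ℂ) /
            ((Nat.factorial A : ℂ) * (Nat.factorial C : ℂ))) *
          ((Nat.factorial (B + D - 1) : ℂ) /
            ((Nat.factorial B : ℂ) * (Nat.factorial D : ℂ))))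
      = (κ⁻¹ * (m * (q - 1) - n * (p - 1)) * (Nat.factorial (A + C - 1) : ℂ) *
          (Nat.factorial (B + D - 1) : ℂ)) *
        (((Nat.factorial A : ℂ) * (Nat.factorial A : ℂ)⁻¹) *
         ((Nat.factorial B : ℂ) * (Nat.factorial B : ℂ)⁻¹) *
         ((Nat.factorial C : ℂ) * (Nat.factorial C : ℂ)⁻¹) *
         ((Nat.factorial D : ℂ) * (Nat.factorial D : ℂ)⁻¹) *
         (κ * κ⁻¹)) := by
        simp only [one_div, div_eq_mul_inv, mul_inv]
        ring
    _ = (m * (q - 1) - n * (p - 1)) *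
        ((1 / κ) * (Nat.factorial (A + C - 1) : ℂ) * (Nat.factorial (B + D - 1) : ℂ)) := by
        rw [h1, h2, h3, h4, h5]
        ring
end

section
/- Let k, l be integers with k ≤ 0 and l ≤ 1, and define brackets on formal symbols by [H^k_{m,-2}, H^l_{n,-1}] = -(κ/4)(n(2-k) - m(2-l)) · ( ((2-k)/2-m+(2-l)/2-n-1)! ((2-k)/2+m+(2-l)/2+n-1)! ) / ( ((2-k)/2-m)! ((2-l)/2-n)! ((2-k)/2+m)! ((2-l)/2+n)! ) · H^{k+l}_{m+n,-2}. With w^p_{m,-2} := (1/κ)(p-m-1)!(p+m-1)! H^{-2p+4}_{m,-2} and w^q_{n,-1} := (1/κ)(q-n-1)!(q+n-1)! H^{-2q+4}_{n,-1}, one has [w^p_{m,-2}, w^q_{n,-1}] = (1/2)(m(q-1) - n(p-1)) · w^{p+q-2}_{m+n,-2}. -/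
/-! The normalisations `(1/κ) A! B!` and `(1/κ) C! D!` of `w^p_{m,-2}` and `w^q_{n,-1}` cancel
the four factorials in the denominator of the structure constant, and together with its
prefactor `-κ/4` leave `-(1/4κ)`. Since `2 - k = 2(p - 1)` and `2 - l = 2(q - 1)`, the remaining
factor `n(2 - k) - m(2 - l)` is `-2 (m(q - 1) - n(p - 1))`. -/

theorem rescaled_bracket_coeff {K : Type*} [Field K] (κ a b c d s F : K)
    (ha : a ≠ 0) (hb : b ≠ 0) (hc : c ≠ 0) (hd : d ≠ 0) :
    (1 / κ * a * b) * (1 / κ * c * d) * (-(κ / 4) * s * F / (a * c * b * d)) =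
      -(s / 4) * (1 / κ * F) := by
  have hκ : κ⁻¹ * κ⁻¹ * κ = κ⁻¹ := by simpa using mul_self_mul_inv κ⁻¹
  have habcd : a * b * (c * d) / (a * c * b * d) = 1 := by field_simp
  calc (1 / κ * a * b) * (1 / κ * c * d) * (-(κ / 4) * s * F / (a * c * b * d))
      = κ⁻¹ * κ⁻¹ * κ * (-(s / 4) * F) * (a * b * (c * d) / (a * c * b * d)) := by ring
    _ = -(s / 4) * (1 / κ * F) := by rw [hκ, habcd]; ring

theorem stmt19_general (κ : ℂ) (k l : ℤ)
    (p q m n : ℂ) (A B C D : ℕ)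
    (hk : (k : ℂ) = -2 * p + 4) (hl : (l : ℂ) = -2 * q + 4) :
    ((1 / κ) * (Nat.factorial A : ℂ) * (Nat.factorial B : ℂ)) *
        ((1 / κ) * (Nat.factorial C : ℂ) * (Nat.factorial D : ℂ)) *
        (-(κ / 4) * (n * (2 - (k : ℂ)) - m * (2 - (l : ℂ))) *
          ((Nat.factorial (A + C - 1) : ℂ) * (Nat.factorial (B + D - 1) : ℂ)) /
          ((Nat.factorial A : ℂ) * (Nat.factorial C : ℂ) *
            (Nat.factorial B : ℂ) * (Nat.factorial D : ℂ))) =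
      (1 / 2) * (m * (q - 1) - n * (p - 1)) *
        ((1 / κ) * (Nat.factorial (A + C - 1) : ℂ) * (Nat.factorial (B + D - 1) : ℂ)) := by
  rw [rescaled_bracket_coeff, hk, hl]
  · ring
  all_goals exact Nat.cast_ne_zero.2 (Nat.factorial_ne_zero _)

/-- The one-loop (double-pole) analogue: the scalar identity converting
`[H^k_{m,-2}, H^l_{n,-1}] = -(κ/4)(n(2-k)-m(2-l)) · (factorial factors) · H^{k+l}_{m+n,-2}`
into `[w^p_{m,-2}, w^q_{n,-1}] = (1/2)(m(q-1)-n(p-1)) w^{p+q-2}_{m+n,-2}` under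
`w^p_{m,-2} = (1/κ)(p-m-1)!(p+m-1)! H^{-2p+4}_{m,-2}` and similarly for `-1` modes.
Wedge conditions are encoded by `A = p-m-1`, `B = p+m-1`, `C = q-n-1`, `D = q+n-1 : ℕ`. -/
theorem stmt19 (κ : ℂ) (hκ : κ ≠ 0) (k l : ℤ) (hk0 : k ≤ 0) (hl1 : l ≤ 1)
    (p q m n : ℂ) (A B C D : ℕ)
    (hA : p - m - 1 = (A : ℂ)) (hB : p + m - 1 = (B : ℂ))
    (hC : q - n - 1 = (C : ℂ)) (hD : q + n - 1 = (D : ℂ))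
    (hk : (k : ℂ) = -2 * p + 4) (hl : (l : ℂ) = -2 * q + 4)
    (hAC : 1 ≤ A + C) (hBD : 1 ≤ B + D) :
    ((1 / κ) * (Nat.factorial A : ℂ) * (Nat.factorial B : ℂ)) *
        ((1 / κ) * (Nat.factorial C : ℂ) * (Nat.factorial D : ℂ)) *
        (-(κ / 4) * (n * (2 - (k : ℂ)) - m * (2 - (l : ℂ))) *
          ((Nat.factorial (A + C - 1) : ℂ) * (Nat.factorial (B + D - 1) : ℂ)) /
          ((Nat.factorial A : ℂ) * (Nat.factorial C : ℂ) *
            (Nat.factorial B : ℂ) * (Nat.factorial D : ℂ))) =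
      (1 / 2) * (m * (q - 1) - n * (p - 1)) *
        ((1 / κ) * (Nat.factorial (A + C - 1) : ℂ) * (Nat.factorial (B + D - 1) : ℂ)) :=
  stmt19_general κ k l p q m n A B C D hk hl
end
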